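/- arXiv:2411.08430 — 2 statements merged into one kernel-verified Lean document; each statement's English description precedes it below -/
import Mathlib

section
/- If a random variable ξ satisfies ‖ξ‖_{L_p} ≤ Σ_{k=1}^m C_k p^{β_k} + C_{m+1} for all p ≥ p₀ (with C_k, β_k > 0), then for every t > 0, P(|ξ| > e(mt + C_{m+1})) ≤ e^{p₀} exp(−min_{1≤k≤m} (t/C_k)^{1/β_k}). -/
open MeasureTheory Real

theorem stmt0 {Ω : Type*} [MeasurableSpace Ω] (μ : Measure Ω) [IsProbabilityMeasure μ]
    (ξ : Ω → ℝ) (m : ℕ) (hm : 0 < m) (p₀ : ℝ) (hp₀ : 1 ≤ p₀)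
    (C β : ℕ → ℝ)
    (hC : ∀ k ∈ Finset.Icc 1 m, 0 < C k) (hCm1 : 0 < C (m + 1))
    (hβ : ∀ k ∈ Finset.Icc 1 m, 0 < β k)
    (hint : ∀ p, p₀ ≤ p → Integrable (fun ω => |ξ ω| ^ p) μ)
    (hmom : ∀ p, p₀ ≤ p →
      (∫ ω, |ξ ω| ^ p ∂μ) ^ (1 / p) ≤ ∑ k ∈ Finset.Icc 1 m, C k * p ^ β k + C (m + 1)) :
    ∀ t > (0 : ℝ),
      (μ {ω | Real.exp 1 * (m * t + C (m + 1)) < |ξ ω|}).toReal ≤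
        Real.exp p₀ *
          Real.exp (-(Finset.Icc 1 m).inf' (Finset.nonempty_Icc.mpr hm)
            (fun k => (t / C k) ^ (1 / β k))) := by
  intro t ht
  set q : ℝ := (Finset.Icc 1 m).inf' (Finset.nonempty_Icc.mpr hm)
      (fun k => (t / C k) ^ (1 / β k)) with hq
  have hqpos : 0 < q := by
    rw [hq, Finset.lt_inf'_iff]
    intro k hk
    exact Real.rpow_pos_of_pos (div_pos ht (hC k hk)) _
  by_cases hcase : q < p₀
  · -- trivial bound via μ ≤ 1
    have h1 : (μ {ω | Real.exp 1 * (m * t + C (m + 1)) < |ξ ω|}).toReal ≤ 1 := by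
      calc (μ {ω | Real.exp 1 * (m * t + C (m + 1)) < |ξ ω|}).toReal
          ≤ (μ Set.univ).toReal := ENNReal.toReal_mono (measure_ne_top _ _)
            (measure_mono (Set.subset_univ _))
        _ = 1 := by simp
    refine h1.trans ?_
    rw [← Real.exp_add]
    exact Real.one_le_exp (by linarith)
  · push_neg at hcase
    have hq0 : (0:ℝ) ≤ q := hqpos.le
    set M : ℝ := m * t + C (m + 1) with hMdef
    have hM : 0 < M := by
      have h1 : (0:ℝ) ≤ (m:ℝ) * t := by positivity
      simp only [hMdef]; linarith
    -- sum bound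
    have hsum : ∑ k ∈ Finset.Icc 1 m, C k * q ^ β k ≤ m * t := by
      have hstep : ∑ k ∈ Finset.Icc 1 m, C k * q ^ β k ≤ ∑ k ∈ Finset.Icc 1 m, t := by
        refine Finset.sum_le_sum fun k hk => ?_
        have hCk := hC k hk
        have hβk := hβ k hk
        have hle : q ≤ (t / C k) ^ (1 / β k) := Finset.inf'_le _ hk
        have h1 : q ^ β k ≤ ((t / C k) ^ (1 / β k)) ^ β k :=
          Real.rpow_le_rpow hq0 hle hβk.le
        have h2 : ((t / C k) ^ (1 / β k)) ^ β k = t / C k := by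
          rw [← Real.rpow_mul (div_nonneg ht.le hCk.le), one_div_mul_cancel hβk.ne',
            Real.rpow_one]
        rw [h2] at h1
        calc C k * q ^ β k ≤ C k * (t / C k) := by
              exact mul_le_mul_of_nonneg_left h1 hCk.le
          _ = t := by field_simp
      refine hstep.trans ?_
      rw [Finset.sum_const, Nat.card_Icc]
      simp [nsmul_eq_mul]
    have hS : ∑ k ∈ Finset.Icc 1 m, C k * q ^ β k + C (m + 1) ≤ M := by
      simp only [hMdef]; linarith
    -- integral bound
    have hIint := hint q hcase
    have hI0 : 0 ≤ ∫ ω, |ξ ω| ^ q ∂μ :=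
      integral_nonneg fun ω => Real.rpow_nonneg (abs_nonneg _) _
    have hIM : ∫ ω, |ξ ω| ^ q ∂μ ≤ M ^ q := by
      have h1 := (hmom q hcase).trans hS
      have h2 : ((∫ ω, |ξ ω| ^ q ∂μ) ^ (1 / q)) ^ q ≤ M ^ q :=
        Real.rpow_le_rpow (Real.rpow_nonneg hI0 _) h1 hq0
      rwa [← Real.rpow_mul hI0, one_div_mul_cancel hqpos.ne', Real.rpow_one] at h2
    -- Markov
    set a : ℝ := Real.exp 1 * M with hadef
    have ha : 0 < a := mul_pos (Real.exp_pos 1) hM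
    have hsub : {ω | a < |ξ ω|} ⊆ {ω | a ^ q ≤ |ξ ω| ^ q} := by
      intro ω hω
      exact Real.rpow_le_rpow ha.le (le_of_lt hω) hq0
    have hmarkov : a ^ q * (μ {ω | a ^ q ≤ |ξ ω| ^ q}).toReal ≤ ∫ ω, |ξ ω| ^ q ∂μ :=
      mul_meas_ge_le_integral_of_nonneg
        (Filter.Eventually.of_forall fun ω => Real.rpow_nonneg (abs_nonneg _) _) hIint _
    have hmono : (μ {ω | a < |ξ ω|}).toReal ≤ (μ {ω | a ^ q ≤ |ξ ω| ^ q}).toReal :=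
      ENNReal.toReal_mono (measure_ne_top _ _) (measure_mono hsub)
    have hapow : 0 < a ^ q := Real.rpow_pos_of_pos ha _
    have hfinal : (μ {ω | a < |ξ ω|}).toReal ≤ M ^ q / a ^ q := by
      rw [le_div_iff₀ hapow, mul_comm]
      calc a ^ q * (μ {ω | a < |ξ ω|}).toReal
          ≤ a ^ q * (μ {ω | a ^ q ≤ |ξ ω| ^ q}).toReal :=
            mul_le_mul_of_nonneg_left hmono hapow.le
        _ ≤ ∫ ω, |ξ ω| ^ q ∂μ := hmarkov
        _ ≤ M ^ q := hIM
    have hratio : M ^ q / a ^ q = Real.exp (-q) := by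
      rw [hadef, Real.mul_rpow (Real.exp_pos 1).le hM.le, Real.exp_one_rpow,
        Real.exp_neg]
      field_simp
    rw [hratio] at hfinal
    refine hfinal.trans ?_
    nth_rewrite 1 [show Real.exp (-q) = 1 * Real.exp (-q) by ring]
    exact mul_le_mul_of_nonneg_right (Real.one_le_exp (by linarith)) (Real.exp_pos _).le
end

section
/- If a random variable ξ satisfies ‖ξ‖_{L_p} ≤ Σ_{k=1}^m C_k p^{β_k} + C_{m+1} for all p ≥ p₀, then for every t > 0, P(|ξ| > e(Σ_{k=1}^m C_k t^{β_k} + C_{m+1})) ≤ e^{p₀} e^{−t}. -/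
open MeasureTheory Real

theorem stmt1 {Ω : Type*} [MeasurableSpace Ω] (μ : Measure Ω) [IsProbabilityMeasure μ]
    (ξ : Ω → ℝ) (m : ℕ) (hm : 0 < m) (p₀ : ℝ) (hp₀ : 1 ≤ p₀)
    (C β : ℕ → ℝ)
    (hC : ∀ k ∈ Finset.Icc 1 m, 0 < C k) (hCm1 : 0 < C (m + 1))
    (hβ : ∀ k ∈ Finset.Icc 1 m, 0 < β k)
    (hint : ∀ p, p₀ ≤ p → Integrable (fun ω => |ξ ω| ^ p) μ)
    (hmom : ∀ p, p₀ ≤ p →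
      (∫ ω, |ξ ω| ^ p ∂μ) ^ (1 / p) ≤ ∑ k ∈ Finset.Icc 1 m, C k * p ^ β k + C (m + 1)) :
    ∀ t > (0 : ℝ),
      (μ {ω | Real.exp 1 * (∑ k ∈ Finset.Icc 1 m, C k * t ^ β k + C (m + 1)) < |ξ ω|}).toReal ≤
        Real.exp p₀ * Real.exp (-t) := by
  intro t ht
  set S : ℝ := ∑ k ∈ Finset.Icc 1 m, C k * t ^ β k + C (m + 1) with hS
  have hS0 : 0 < S := by
    apply add_pos_of_nonneg_of_pos _ hCm1
    apply Finset.sum_nonneg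
    intro k hk
    exact le_of_lt (mul_pos (hC k hk) (Real.rpow_pos_of_pos ht _))
  rcases le_or_gt p₀ t with hpt | hpt
  · -- main case
    have ht0 : (0:ℝ) < t := ht
    have hmomt := hmom t hpt
    have hintt := hint t hpt
    have hI0 : 0 ≤ ∫ ω, |ξ ω| ^ t ∂μ :=
      integral_nonneg fun ω => Real.rpow_nonneg (abs_nonneg _) _
    have hIS : (∫ ω, |ξ ω| ^ t ∂μ) ≤ S ^ t := by
      have h := Real.rpow_le_rpow (Real.rpow_nonneg hI0 _) hmomt ht0.le
      rwa [← Real.rpow_mul hI0, one_div, inv_mul_cancel₀ ht0.ne', Real.rpow_one] at h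
    set a : ℝ := Real.exp 1 * S with ha
    have ha0 : 0 < a := mul_pos (Real.exp_pos 1) hS0
    have hmarkov : a ^ t * (μ {ω | a ^ t ≤ |ξ ω| ^ t}).toReal ≤ ∫ ω, |ξ ω| ^ t ∂μ :=
      mul_meas_ge_le_integral_of_nonneg
        (Filter.Eventually.of_forall fun ω => Real.rpow_nonneg (abs_nonneg _) _) hintt _
    have hsub : {ω | a < |ξ ω|} ⊆ {ω | a ^ t ≤ |ξ ω| ^ t} := by
      intro ω hω
      exact Real.rpow_le_rpow ha0.le (le_of_lt hω) ht0.le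
    have hmono : (μ {ω | a < |ξ ω|}).toReal ≤ (μ {ω | a ^ t ≤ |ξ ω| ^ t}).toReal :=
      ENNReal.toReal_mono (measure_ne_top _ _) (measure_mono hsub)
    have hat : (0:ℝ) < a ^ t := Real.rpow_pos_of_pos ha0 _
    have key : (μ {ω | a < |ξ ω|}).toReal ≤ S ^ t / a ^ t := by
      rw [le_div_iff₀ hat, mul_comm]
      calc a ^ t * (μ {ω | a < |ξ ω|}).toReal
          ≤ a ^ t * (μ {ω | a ^ t ≤ |ξ ω| ^ t}).toReal := by
            exact mul_le_mul_of_nonneg_left hmono hat.le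
        _ ≤ ∫ ω, |ξ ω| ^ t ∂μ := hmarkov
        _ ≤ S ^ t := hIS
    have hval : S ^ t / a ^ t = Real.exp (-t) := by
      rw [ha, Real.mul_rpow (Real.exp_pos 1).le hS0.le, Real.exp_one_rpow, mul_comm,
        ← div_div, div_self (Real.rpow_pos_of_pos hS0 t).ne', Real.exp_neg, one_div]
    calc (μ {ω | a < |ξ ω|}).toReal ≤ S ^ t / a ^ t := key
      _ = Real.exp (-t) := hval
      _ ≤ Real.exp p₀ * Real.exp (-t) := by
          nlinarith [Real.one_le_exp (by linarith : (0:ℝ) ≤ p₀), Real.exp_pos (-t)]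
  · -- trivial case t < p₀
    have h1 : (μ {ω | Real.exp 1 * S < |ξ ω|}).toReal ≤ 1 := by
      rw [← ENNReal.toReal_one]
      exact ENNReal.toReal_mono (by simp) (prob_le_one)
    have : (1:ℝ) ≤ Real.exp p₀ * Real.exp (-t) := by
      rw [← Real.exp_add]
      exact Real.one_le_exp (by linarith)
    linarith
end
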